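/- arXiv:1503.00239 — 2 statements merged into one kernel-verified Lean document; each statement's English description precedes it below -/
import Mathlib

section
/- Fix a sign s ∈ {+1, −1}, let Π = I − |ψ⟩⟨ψ|, and suppose the vector v = Π (A − s·i·B) ψ is nonzero. Then with the choice ψ⊥ = v/‖v‖ (which is a unit vector orthogonal to ψ), the Maccone–Pati sum uncertainty relation is saturated: ΔA² + ΔB² = s·i⟨[A,B]⟩ + |⟪ψ, (A + s·i·B) ψ⊥⟫|². -/
open scoped ComplexInnerProductSpace BigOperators

noncomputable section

variable {H : Type*} [NormedAddCommGroup H] [InnerProductSpace ℂ H]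

/-- Expectation value ⟨A⟩ = Re ⟪ψ, A ψ⟫ of an operator in the state ψ. -/
def expVal (ψ : H) (A : H →ₗ[ℂ] H) : ℝ := (⟪ψ, A ψ⟫).re

/-- Variance ΔA² = ⟨A²⟩ − ⟨A⟩². -/
def varOf (ψ : H) (A : H →ₗ[ℂ] H) : ℝ := (⟪ψ, A (A ψ)⟫).re - (expVal ψ A) ^ 2

/-- Standard deviation ΔA = √(ΔA²). -/
def stdDev (ψ : H) (A : H →ₗ[ℂ] H) : ℝ := Real.sqrt (varOf ψ A)

/-- The real number i⟨[A,B]⟩. -/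
def commRe (ψ : H) (A B : H →ₗ[ℂ] H) : ℝ :=
  (Complex.I * ⟪ψ, (A ∘ₗ B - B ∘ₗ A) ψ⟫).re

/-- The projection Π = I − |ψ⟩⟨ψ|. -/
def projPerp (ψ : H) : H →ₗ[ℂ] H :=
  LinearMap.id - ((innerSL ℂ ψ).smulRight ψ).toLinearMap

/-- The deviation operator Ă = A − ⟨A⟩I. -/
def devOp (ψ : H) (A : H →ₗ[ℂ] H) : H →ₗ[ℂ] H :=
  A - (expVal ψ A : ℂ) • LinearMap.id

/-- The operator C = −i[A,B]. -/
def opC (A B : H →ₗ[ℂ] H) : H →ₗ[ℂ] H := (-Complex.I) • (A ∘ₗ B - B ∘ₗ A)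

/-- The operator F = ĂB̆ + B̆Ă. -/
def opF (ψ : H) (A B : H →ₗ[ℂ] H) : H →ₗ[ℂ] H :=
  devOp ψ A ∘ₗ devOp ψ B + devOp ψ B ∘ₗ devOp ψ A


/-!
Write `u = (A - s i B) ψ` and `v = Π u`. Since `A` and `B` are symmetric, `A + s i B` is adjoint
to `A - s i B`, so `⟪ψ, (A + s i B) φ⟫ = ⟪u, φ⟫`; for `φ = v / ‖v‖` this equals `‖v‖`, because
`u - v` is a multiple of `ψ` and `v ⊥ ψ`. On the other hand, by Pythagoras
`‖v‖² = ‖u‖² - |⟪ψ, u⟫|²`, and expanding both terms gives `ΔA² + s² ΔB² - s i⟨[A,B]⟩`.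
-/

open Complex ComplexConjugate

variable {ψ : H}

theorem projPerp_apply (x : H) : projPerp ψ x = x - ⟪ψ, x⟫ • ψ := rfl

theorem inner_projPerp_right (hψ : ‖ψ‖ = 1) (x : H) : ⟪ψ, projPerp ψ x⟫ = 0 := by
  rw [projPerp_apply, inner_sub_right, inner_smul_right, inner_self_eq_norm_sq_to_K, hψ]
  simp

theorem inner_projPerp_self (hψ : ‖ψ‖ = 1) (x : H) :
    ⟪x, projPerp ψ x⟫ = ⟪projPerp ψ x, projPerp ψ x⟫ := by
  nth_rewrite 2 [projPerp_apply]
  rw [inner_sub_left, inner_smul_left, inner_projPerp_right hψ, mul_zero, sub_zero]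

theorem norm_projPerp_sq (hψ : ‖ψ‖ = 1) (x : H) :
    ‖projPerp ψ x‖ ^ 2 = ‖x‖ ^ 2 - ‖⟪ψ, x⟫‖ ^ 2 := by
  have hx : x = projPerp ψ x + ⟪ψ, x⟫ • ψ := by rw [projPerp_apply, sub_add_cancel]
  have horth : ⟪projPerp ψ x, ⟪ψ, x⟫ • ψ⟫ = 0 := by
    rw [inner_smul_right, inner_eq_zero_symm.mp (inner_projPerp_right hψ x), mul_zero]
  have h := norm_add_sq_eq_norm_sq_add_norm_sq_of_inner_eq_zero _ _ horth
  rw [← hx, norm_smul, hψ, mul_one] at h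
  linear_combination -h

theorem inner_smul_inv_norm_projPerp (hψ : ‖ψ‖ = 1) (x : H) :
    ⟪x, ((‖projPerp ψ x‖ : ℂ))⁻¹ • projPerp ψ x⟫ = ‖projPerp ψ x‖ := by
  rw [inner_smul_right, inner_projPerp_self hψ, inner_self_eq_norm_sq_to_K]
  simp only [coe_algebraMap, sq, ← mul_assoc, inv_mul_mul_self]

section Symmetric

variable {A B : H →ₗ[ℂ] H}

theorem inner_add_smul_I_apply (hA : A.IsSymmetric) (hB : B.IsSymmetric) (c : ℝ) (x y : H) :
    ⟪x, (A + (c * I) • B) y⟫ = ⟪(A - (c * I) • B) x, y⟫ := by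
  simp only [LinearMap.add_apply, LinearMap.sub_apply, LinearMap.smul_apply, inner_add_right,
    inner_sub_left, inner_smul_right, inner_smul_left, map_mul, conj_I, conj_ofReal, hA x y,
    hB x y]
  ring

theorem commRe_eq_neg_two_mul_im_inner (hA : A.IsSymmetric) (hB : B.IsSymmetric) :
    commRe ψ A B = -2 * (⟪A ψ, B ψ⟫).im := by
  have h : ⟪ψ, (A ∘ₗ B - B ∘ₗ A) ψ⟫ = ⟪A ψ, B ψ⟫ - conj ⟪A ψ, B ψ⟫ := by
    rw [LinearMap.sub_apply, inner_sub_right, LinearMap.comp_apply, LinearMap.comp_apply,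
      ← hA, ← hB, inner_conj_symm]
  rw [commRe, h, sub_conj]
  simp

theorem varOf_eq_norm_sq_sub (hA : A.IsSymmetric) :
    varOf ψ A = ‖A ψ‖ ^ 2 - expVal ψ A ^ 2 := by
  rw [varOf, ← hA, inner_self_eq_norm_sq_to_K]
  norm_cast

theorem norm_sub_smul_I_apply_sq (hA : A.IsSymmetric) (hB : B.IsSymmetric) (c : ℝ) :
    ‖(A - (c * I) • B) ψ‖ ^ 2 = ‖A ψ‖ ^ 2 + c ^ 2 * ‖B ψ‖ ^ 2 - c * commRe ψ A B := by
  rw [LinearMap.sub_apply, LinearMap.smul_apply, @norm_sub_sq ℂ, norm_smul, inner_smul_right,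
    commRe_eq_neg_two_mul_im_inner hA hB]
  simp only [RCLike.re_to_complex, norm_mul, norm_I, norm_real, Real.norm_eq_abs, mul_one,
    mul_pow, sq_abs, mul_re, mul_im, I_re, I_im, ofReal_re, ofReal_im]
  ring

theorem norm_inner_sub_smul_I_apply_sq (hA : A.IsSymmetric) (hB : B.IsSymmetric) (c : ℝ) :
    ‖⟪ψ, (A - (c * I) • B) ψ⟫‖ ^ 2 = expVal ψ A ^ 2 + c ^ 2 * expVal ψ B ^ 2 := by
  rw [LinearMap.sub_apply, LinearMap.smul_apply, inner_sub_right, inner_smul_right,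
    ← hA.coe_re_inner_self_apply, ← hB.coe_re_inner_self_apply, Complex.sq_norm, normSq_apply]
  simp only [RCLike.re_to_complex, coe_algebraMap, sub_re, ofReal_re, mul_re, I_re, mul_zero,
    ofReal_im, I_im, mul_one, sub_self, zero_mul, mul_im, add_zero, sub_zero, sub_im, zero_add,
    zero_sub, mul_neg, neg_mul, neg_neg, expVal]
  ring

theorem norm_projPerp_sub_smul_I_apply_sq (hψ : ‖ψ‖ = 1) (hA : A.IsSymmetric)
    (hB : B.IsSymmetric) (c : ℝ) :
    ‖projPerp ψ ((A - (c * I) • B) ψ)‖ ^ 2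
      = varOf ψ A + c ^ 2 * varOf ψ B - c * commRe ψ A B := by
  rw [norm_projPerp_sq hψ, norm_sub_smul_I_apply_sq hA hB, norm_inner_sub_smul_I_apply_sq hA hB,
    varOf_eq_norm_sq_sub hA, varOf_eq_norm_sq_sub hB]
  ring

end Symmetric

theorem maccone_pati_saturation_general
    {H : Type*} [NormedAddCommGroup H] [InnerProductSpace ℂ H]
    (A B : H →ₗ[ℂ] H) (hA : A.IsSymmetric) (hB : B.IsSymmetric)
    (ψ : H) (hψ : ‖ψ‖ = 1)
    (s : ℝ) (hs : s = 1 ∨ s = -1)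
    (v : H) (hvdef : v = projPerp ψ ((A - ((s : ℂ) * Complex.I) • B) ψ)) (hv : v ≠ 0)
    (ψperp : H) (hperpdef : ψperp = ((‖v‖ : ℂ))⁻¹ • v) :
    ‖ψperp‖ = 1 ∧ ⟪ψ, ψperp⟫ = 0 ∧
      varOf ψ A + varOf ψ B
        = s * commRe ψ A B + ‖⟪ψ, (A + ((s : ℂ) * Complex.I) • B) ψperp⟫‖ ^ 2 := by
  have hψv : ⟪ψ, v⟫ = 0 := hvdef ▸ inner_projPerp_right hψ _
  have hsaturated : ⟪ψ, (A + ((s : ℂ) * I) • B) ψperp⟫ = ‖v‖ := by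
    rw [inner_add_smul_I_apply hA hB, hperpdef, hvdef, inner_smul_inv_norm_projPerp hψ]
  have hs2 : s ^ 2 = 1 := by rcases hs with rfl | rfl <;> norm_num
  refine ⟨?_, ?_, ?_⟩
  · simpa [hperpdef] using norm_smul_inv_norm (𝕜 := ℂ) hv
  · rw [hperpdef, inner_smul_right, hψv, mul_zero]
  · rw [hsaturated, norm_real, norm_norm, hvdef, norm_projPerp_sub_smul_I_apply_sq hψ hA hB, hs2]
    ring

theorem maccone_pati_saturation
    {H : Type*} [NormedAddCommGroup H] [InnerProductSpace ℂ H] [FiniteDimensional ℂ H]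
    (A B : H →ₗ[ℂ] H) (hA : A.IsSymmetric) (hB : B.IsSymmetric)
    (ψ : H) (hψ : ‖ψ‖ = 1)
    (s : ℝ) (hs : s = 1 ∨ s = -1)
    (v : H) (hvdef : v = projPerp ψ ((A - ((s : ℂ) * Complex.I) • B) ψ)) (hv : v ≠ 0)
    (ψperp : H) (hperpdef : ψperp = ((‖v‖ : ℂ))⁻¹ • v) :
    ‖ψperp‖ = 1 ∧ ⟪ψ, ψperp⟫ = 0 ∧
      varOf ψ A + varOf ψ B
        = s * commRe ψ A B + ‖⟪ψ, (A + ((s : ℂ) * Complex.I) • B) ψperp⟫‖ ^ 2 :=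
  maccone_pati_saturation_general A B hA hB ψ hψ s hs v hvdef hv ψperp hperpdef
end
end

section
/- (Strengthened Schrödinger-type sum relation.) Let C = −i[A,B] and F = (A − ⟨A⟩I)(B − ⟨B⟩I) + (B − ⟨B⟩I)(A − ⟨A⟩I); suppose ⟨C⟩² + ⟨F⟩² > 0, and set z = (⟨C⟩ + i⟨F⟩)/√(⟨C⟩² + ⟨F⟩²) ∈ ℂ. Then for every unit vector ψ⊥ ∈ H with ⟪ψ, ψ⊥⟫ = 0, one has ΔA² + ΔB² ≥ √(⟨C⟩² + ⟨F⟩²) + |⟪ψ⊥, (A + i·z·B) ψ⟫|². -/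
/-!
Put u = Ăψ, v = B̆ψ and c = ⟪u, v⟫. Then ΔA² = ‖u‖², ΔB² = ‖v‖², ⟨F⟩ = 2 Re c and, since
[A,B] = [Ă,B̆], ⟨C⟩ = 2 Im c. Hence the square root is 2|c| and i z = −c̄/|c| is the phase for which
‖u + i z v‖² ≤ ΔA² + ΔB² − 2|c|. Because ψ⊥ ⊥ ψ, ⟪ψ⊥, (A + i z B)ψ⟫ = ⟪ψ⊥, u + i z v⟫, whose square
is at most ‖u + i z v‖².
-/

open scoped ComplexInnerProductSpace BigOperators

noncomputable section

variable {H : Type*} [NormedAddCommGroup H] [InnerProductSpace ℂ H]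

lemma devOp_apply (ψ x : H) (A : H →ₗ[ℂ] H) :
    devOp ψ A x = A x - (expVal ψ A : ℂ) • x := rfl

lemma opC_devOp (ψ : H) (A B : H →ₗ[ℂ] H) :
    opC (devOp ψ A) (devOp ψ B) = opC A B := by
  ext x
  simp only [opC, devOp, LinearMap.smul_apply, LinearMap.sub_apply, LinearMap.comp_apply,
    LinearMap.id_apply, map_sub, map_smul]
  module

lemma LinearMap.IsSymmetric.devOp {A : H →ₗ[ℂ] H} (hA : A.IsSymmetric) (ψ : H) :
    (devOp ψ A).IsSymmetric :=
  hA.sub (LinearMap.IsSymmetric.id.smul (Complex.conj_ofReal _))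

lemma expVal_opC_of_isSymmetric {S T : H →ₗ[ℂ] H} (hS : S.IsSymmetric) (hT : T.IsSymmetric)
    (ψ : H) : expVal ψ (opC S T) = 2 * (⟪S ψ, T ψ⟫).im := by
  have hST : ⟪ψ, S (T ψ)⟫ - ⟪ψ, T (S ψ)⟫ = 2 * Complex.I * (⟪S ψ, T ψ⟫).im := by
    rw [← hS ψ (T ψ), ← hT ψ (S ψ), ← inner_conj_symm (T ψ), Complex.sub_conj]
    push_cast
    ring
  simp only [expVal, opC, LinearMap.smul_apply, LinearMap.sub_apply, LinearMap.comp_apply,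
    inner_smul_right, inner_sub_right, hST]
  simp

lemma expVal_add_comp_of_isSymmetric {S T : H →ₗ[ℂ] H} (hS : S.IsSymmetric)
    (hT : T.IsSymmetric) (ψ : H) :
    expVal ψ (S ∘ₗ T + T ∘ₗ S) = 2 * (⟪S ψ, T ψ⟫).re := by
  simp only [expVal, LinearMap.add_apply, LinearMap.comp_apply, inner_add_right, ← hS ψ (T ψ),
    ← hT ψ (S ψ), ← inner_conj_symm (T ψ), Complex.add_conj]
  simp

lemma expVal_opC {A B : H →ₗ[ℂ] H} (hA : A.IsSymmetric) (hB : B.IsSymmetric) (ψ : H) :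
    expVal ψ (opC A B) = 2 * (⟪devOp ψ A ψ, devOp ψ B ψ⟫).im := by
  rw [← opC_devOp, expVal_opC_of_isSymmetric (hA.devOp ψ) (hB.devOp ψ)]

lemma expVal_opF {A B : H →ₗ[ℂ] H} (hA : A.IsSymmetric) (hB : B.IsSymmetric) (ψ : H) :
    expVal ψ (opF ψ A B) = 2 * (⟪devOp ψ A ψ, devOp ψ B ψ⟫).re :=
  expVal_add_comp_of_isSymmetric (hA.devOp ψ) (hB.devOp ψ) ψ

lemma varOf_eq_norm_devOp_sq {A : H →ₗ[ℂ] H} (hA : A.IsSymmetric) {ψ : H} (hψ : ‖ψ‖ = 1) :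
    varOf ψ A = ‖devOp ψ A ψ‖ ^ 2 := by
  have hre : (⟪A ψ, (expVal ψ A : ℂ) • ψ⟫).re = expVal ψ A ^ 2 := by
    rw [inner_smul_right, hA, Complex.re_ofReal_mul, expVal, sq]
  rw [varOf, devOp_apply, norm_sub_sq (𝕜 := ℂ), ← hA, RCLike.re_to_complex, hre,
    ← RCLike.re_to_complex, inner_self_eq_norm_sq, norm_smul, hψ, Complex.norm_real,
    Real.norm_eq_abs, mul_one, sq_abs]
  ring

lemma inner_add_smul_apply_eq_inner_devOp {ψ e : H} (he : ⟪ψ, e⟫ = 0) (A B : H →ₗ[ℂ] H)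
    (w : ℂ) : ⟪e, (A + w • B) ψ⟫ = ⟪e, devOp ψ A ψ + w • devOp ψ B ψ⟫ := by
  have he' : ⟪e, ψ⟫ = 0 := by rw [← inner_conj_symm, he, map_zero]
  simp only [devOp_apply, LinearMap.add_apply, LinearMap.smul_apply, inner_add_right,
    inner_sub_right, inner_smul_right, he']
  ring

lemma norm_add_smul_sq_le {w : ℂ} (hw : ‖w‖ ≤ 1) (u v : H) :
    ‖u + w • v‖ ^ 2 ≤ ‖u‖ ^ 2 + ‖v‖ ^ 2 + 2 * (w * ⟪u, v⟫).re := by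
  rw [norm_add_sq (𝕜 := ℂ), inner_smul_right, RCLike.re_to_complex, norm_smul]
  have : (‖w‖ * ‖v‖) ^ 2 ≤ ‖v‖ ^ 2 :=
    pow_le_pow_left₀ (by positivity) (mul_le_of_le_one_left (norm_nonneg v) hw) 2
  linarith

lemma norm_add_phase_smul_sq_le (u v : H) :
    ‖u + (-starRingEnd ℂ ⟪u, v⟫ / ‖⟪u, v⟫‖) • v‖ ^ 2 ≤ ‖u‖ ^ 2 + ‖v‖ ^ 2 - 2 * ‖⟪u, v⟫‖ := by
  set c := ⟪u, v⟫
  have hphase : ‖-starRingEnd ℂ c / ‖c‖‖ ≤ 1 := by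
    rw [norm_div, norm_neg, Complex.norm_conj, Complex.norm_real, norm_norm]
    exact div_self_le_one _
  have hmul : -starRingEnd ℂ c / ‖c‖ * c = -‖c‖ := by
    rw [div_mul_eq_mul_div, neg_mul, mul_comm, Complex.mul_conj', neg_div, pow_two,
      mul_self_div_self]
  have := norm_add_smul_sq_le hphase u v
  rw [hmul, Complex.neg_re, Complex.ofReal_re] at this
  linarith

-- At c = 0 both sides are 0, by the convention x / 0 = 0.
lemma Complex.I_mul_two_im_add_I_mul_two_re_div (c : ℂ) :
    I * ((((2 * c.im : ℝ) : ℂ) + I * ((2 * c.re : ℝ) : ℂ)) / ((2 * ‖c‖ : ℝ) : ℂ))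
      = -starRingEnd ℂ c / ‖c‖ := by
  rcases eq_or_ne c 0 with rfl | hc
  · simp
  have hn : ((‖c‖ : ℝ) : ℂ) ≠ 0 := by exact_mod_cast norm_ne_zero_iff.mpr hc
  have hconj : starRingEnd ℂ c = c.re - c.im * I := by
    apply Complex.ext <;> simp
  rw [hconj]
  push_cast
  field_simp
  linear_combination (c.re : ℂ) * I_sq

lemma sqrt_two_mul_im_sq_add_two_mul_re_sq (c : ℂ) :
    √((2 * c.im) ^ 2 + (2 * c.re) ^ 2) = 2 * ‖c‖ := by
  rw [← Real.sqrt_sq (by positivity : 0 ≤ 2 * ‖c‖), mul_pow 2 ‖c‖, Complex.sq_norm,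
    Complex.normSq_apply]
  ring_nf

theorem strengthened_schrodinger_sum_relation_general
    {H : Type*} [NormedAddCommGroup H] [InnerProductSpace ℂ H]
    (A B : H →ₗ[ℂ] H) (hA : A.IsSymmetric) (hB : B.IsSymmetric)
    (ψ : H) (hψ : ‖ψ‖ = 1)
    (z : ℂ)
    (hz : z = ((expVal ψ (opC A B) : ℂ) + Complex.I * (expVal ψ (opF ψ A B) : ℂ))
        / ((Real.sqrt (expVal ψ (opC A B) ^ 2 + expVal ψ (opF ψ A B) ^ 2) : ℝ) : ℂ))
    (ψperp : H) (hperpunit : ‖ψperp‖ = 1) (hperp : ⟪ψ, ψperp⟫ = 0) :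
    varOf ψ A + varOf ψ B
      ≥ Real.sqrt (expVal ψ (opC A B) ^ 2 + expVal ψ (opF ψ A B) ^ 2)
        + ‖⟪ψperp, (A + (Complex.I * z) • B) ψ⟫‖ ^ 2 := by
  set u := devOp ψ A ψ
  set v := devOp ψ B ψ
  have hsqrt : √(expVal ψ (opC A B) ^ 2 + expVal ψ (opF ψ A B) ^ 2) = 2 * ‖⟪u, v⟫‖ := by
    rw [expVal_opC hA hB, expVal_opF hA hB, sqrt_two_mul_im_sq_add_two_mul_re_sq]
  have hphase : Complex.I * z = -starRingEnd ℂ ⟪u, v⟫ / ‖⟪u, v⟫‖ := by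
    rw [hz, hsqrt, expVal_opC hA hB, expVal_opF hA hB, Complex.I_mul_two_im_add_I_mul_two_re_div]
  have hproj : ‖⟪ψperp, u + (Complex.I * z) • v⟫‖ ≤ ‖u + (Complex.I * z) • v‖ := by
    simpa only [hperpunit, one_mul] using norm_inner_le_norm (𝕜 := ℂ) ψperp _
  rw [ge_iff_le, hsqrt, inner_add_smul_apply_eq_inner_devOp hperp, varOf_eq_norm_devOp_sq hA hψ,
    varOf_eq_norm_devOp_sq hB hψ]
  calc 2 * ‖⟪u, v⟫‖ + ‖⟪ψperp, u + (Complex.I * z) • v⟫‖ ^ 2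
      ≤ 2 * ‖⟪u, v⟫‖ + ‖u + (Complex.I * z) • v‖ ^ 2 := by gcongr
    _ ≤ ‖u‖ ^ 2 + ‖v‖ ^ 2 := by
      linarith [hphase ▸ norm_add_phase_smul_sq_le (H := H) u v]

theorem strengthened_schrodinger_sum_relation
    {H : Type*} [NormedAddCommGroup H] [InnerProductSpace ℂ H] [FiniteDimensional ℂ H]
    (A B : H →ₗ[ℂ] H) (hA : A.IsSymmetric) (hB : B.IsSymmetric)
    (ψ : H) (hψ : ‖ψ‖ = 1)
    (hpos : 0 < expVal ψ (opC A B) ^ 2 + expVal ψ (opF ψ A B) ^ 2)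
    (z : ℂ)
    (hz : z = ((expVal ψ (opC A B) : ℂ) + Complex.I * (expVal ψ (opF ψ A B) : ℂ))
        / ((Real.sqrt (expVal ψ (opC A B) ^ 2 + expVal ψ (opF ψ A B) ^ 2) : ℝ) : ℂ))
    (ψperp : H) (hperpunit : ‖ψperp‖ = 1) (hperp : ⟪ψ, ψperp⟫ = 0) :
    varOf ψ A + varOf ψ B
      ≥ Real.sqrt (expVal ψ (opC A B) ^ 2 + expVal ψ (opF ψ A B) ^ 2)
        + ‖⟪ψperp, (A + (Complex.I * z) • B) ψ⟫‖ ^ 2 :=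
  strengthened_schrodinger_sum_relation_general A B hA hB ψ hψ z hz ψperp hperpunit hperp
end
end
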